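/- arXiv:2106.02150 — 2 statements merged into one kernel-verified Lean document; each statement's English description precedes it below -/
import Mathlib

section
/- Every probability distribution q on a finite set {1,...,n} can be written as a convex combination q = Σ_{i=1}^k λ_i q^{X_i} with λ_i ≥ 0, Σ λ_i = 1, where [n] ⊇ X_1 ⊇ X_2 ⊇ ... ⊇ X_k ≠ ∅ is a nested chain of nonempty subsets and each q^{X_i} is the indifference distribution with support X_i. -/
/-!
With `f j = 1 / p*_j`, which exceeds `1` and increases with `j` because the costs do, `q^X` gives
`x(i)` the increment `f (x(i)) - f (x(i-1))` divided by `f (x(k)) - 1`; the increments are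
positive and telescope, so `q^X` is a distribution with support `X`. For the decomposition, peel
off from `q` (supported in `S`) the largest multiple of `q^S` that keeps it nonnegative: the rest
vanishes at some point of `S`, and renormalized it is supported in a strictly smaller set, so
recursion produces a decreasing chain.
-/

/-- The seller's indifference threshold p* for cost c and buyer values v0 < v1. -/
noncomputable def pstarF (v0 v1 c : ℝ) : ℝ := (v0 - c) / (v1 - c)

/-- The indifference distribution q^X for a nonempty subset X of seller types. -/
noncomputable def indiff {n : ℕ} (v0 v1 : ℝ) (c : Fin n → ℝ) (X : Finset (Fin n))
    (i : Fin n) : ℝ :=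
  if i ∈ X then
    (if h : X.Nonempty then
      ((pstarF v0 v1 (c i))⁻¹ -
        (if hb : (X.filter (fun j => j < i)).Nonempty then
          (pstarF v0 v1 (c ((X.filter (fun j => j < i)).max' hb)))⁻¹
        else 1)) / ((pstarF v0 v1 (c (X.max' h)))⁻¹ - 1)
    else 0)
  else 0

lemma one_lt_inv_pstarF {v0 v1 c : ℝ} (hc : c < v0) (hv : v0 < v1) :
    1 < (pstarF v0 v1 c)⁻¹ := by
  rw [pstarF, inv_div, one_lt_div (by linarith)]
  linarith

lemma inv_pstarF_lt_inv_pstarF {v0 v1 c c' : ℝ} (hcc' : c < c') (hc' : c' < v0) (hv : v0 < v1) :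
    (pstarF v0 v1 c)⁻¹ < (pstarF v0 v1 c')⁻¹ := by
  rw [pstarF, pstarF, inv_div, inv_div, div_lt_div_iff₀ (by linarith) (by linarith)]
  nlinarith

section TopValue

variable {α : Type*} [LinearOrder α]

/-- The default `1` is the paper's `1 / p*_0`. -/
noncomputable def topValue (f : α → ℝ) (X : Finset α) : ℝ :=
  if h : X.Nonempty then f (X.max' h) else 1

@[simp]
lemma topValue_empty (f : α → ℝ) : topValue f ∅ = 1 := by
  simp [topValue]

lemma topValue_insert_of_forall_lt (f : α → ℝ) {a : α} {s : Finset α} (h : ∀ x ∈ s, x < a) :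
    topValue f (insert a s) = f a := by
  rw [topValue, dif_pos (s.insert_nonempty a)]
  congr
  exact le_antisymm ((insert a s).max'_le _ _ fun x hx => (Finset.mem_insert.mp hx).elim
    (·.le) (fun hx => (h x hx).le)) ((insert a s).le_max' a (s.mem_insert_self a))

lemma one_lt_topValue {f : α → ℝ} (hf : ∀ i, 1 < f i) {X : Finset α} (hX : X.Nonempty) :
    1 < topValue f X := by
  rw [topValue, dif_pos hX]
  exact hf _

lemma topValue_filter_lt_lt {f : α → ℝ} (hf1 : ∀ i, 1 < f i) (hf : StrictMono f)
    (X : Finset α) (i : α) : topValue f (X.filter (· < i)) < f i := by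
  unfold topValue
  split_ifs with h
  · exact hf (Finset.mem_filter.mp (Finset.max'_mem _ h)).2
  · exact hf1 i

theorem sum_sub_topValue_filter_lt (f : α → ℝ) (X : Finset α) :
    ∑ i ∈ X, (f i - topValue f (X.filter (· < i))) = topValue f X - 1 := by
  classical
  induction X using Finset.induction_on_max with
  | empty => simp
  | insert a s hlt ih =>
    have hfilter_a : (insert a s).filter (· < a) = s := by
      rw [Finset.filter_insert, if_neg (lt_irrefl a), Finset.filter_true_of_mem hlt]
    have hfilter : ∀ i ∈ s, (insert a s).filter (· < i) = s.filter (· < i) := fun i hi => by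
      rw [Finset.filter_insert, if_neg (hlt i hi).not_gt]
    have ha : a ∉ s := fun ha => lt_irrefl a (hlt a ha)
    rw [Finset.sum_insert ha, hfilter_a, Finset.sum_congr rfl fun i hi => by rw [hfilter i hi], ih,
      topValue_insert_of_forall_lt f hlt]
    ring

end TopValue

section NormalizedIncrement

variable {α : Type*} [LinearOrder α]

noncomputable def normalizedIncrement (f : α → ℝ) (X : Finset α) (i : α) : ℝ :=
  if i ∈ X then (f i - topValue f (X.filter (· < i))) / (topValue f X - 1) else 0

lemma normalizedIncrement_of_notMem (f : α → ℝ) {X : Finset α} {i : α} (hi : i ∉ X) :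
    normalizedIncrement f X i = 0 :=
  if_neg hi

lemma normalizedIncrement_of_mem (f : α → ℝ) {X : Finset α} {i : α} (hi : i ∈ X) :
    normalizedIncrement f X i = (f i - topValue f (X.filter (· < i))) / (topValue f X - 1) :=
  if_pos hi

variable {f : α → ℝ}

lemma normalizedIncrement_pos (hf1 : ∀ i, 1 < f i) (hf : StrictMono f) {X : Finset α} {i : α}
    (hi : i ∈ X) : 0 < normalizedIncrement f X i := by
  rw [normalizedIncrement_of_mem f hi]
  exact div_pos (sub_pos.mpr (topValue_filter_lt_lt hf1 hf X i))
    (sub_pos.mpr (one_lt_topValue hf1 ⟨i, hi⟩))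

lemma normalizedIncrement_pos_iff (hf1 : ∀ i, 1 < f i) (hf : StrictMono f) (X : Finset α)
    (i : α) : 0 < normalizedIncrement f X i ↔ i ∈ X :=
  ⟨fun h => by_contra fun hi => h.ne' (normalizedIncrement_of_notMem f hi),
    normalizedIncrement_pos hf1 hf⟩

lemma normalizedIncrement_nonneg (hf1 : ∀ i, 1 < f i) (hf : StrictMono f) (X : Finset α)
    (i : α) : 0 ≤ normalizedIncrement f X i := by
  by_cases hi : i ∈ X
  · exact (normalizedIncrement_pos hf1 hf hi).le
  · exact (normalizedIncrement_of_notMem f hi).ge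

lemma sum_normalizedIncrement [Fintype α] (hf1 : ∀ i, 1 < f i) {X : Finset α}
    (hX : X.Nonempty) : ∑ i, normalizedIncrement f X i = 1 := by
  rw [← Finset.sum_subset X.subset_univ fun i _ hi => normalizedIncrement_of_notMem f hi,
    Finset.sum_congr rfl fun i hi => normalizedIncrement_of_mem f hi, ← Finset.sum_div,
    sum_sub_topValue_filter_lt]
  exact div_self (sub_pos.mpr (one_lt_topValue hf1 hX)).ne'

end NormalizedIncrement

lemma indiff_eq_normalizedIncrement {n : ℕ} (v0 v1 : ℝ) (c : Fin n → ℝ) {X : Finset (Fin n)}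
    (hX : X.Nonempty) :
    indiff v0 v1 c X = normalizedIncrement (fun j => (pstarF v0 v1 (c j))⁻¹) X := by
  funext i
  simp only [indiff, normalizedIncrement, topValue, dif_pos hX]

lemma Finset.exists_max_mul_le {ι : Type*} {S : Finset ι} (hS : S.Nonempty) {w q : ι → ℝ}
    (hw : ∀ x ∈ S, 0 < w x) (hq : ∀ x ∈ S, 0 ≤ q x) :
    ∃ t, 0 ≤ t ∧ (∀ x ∈ S, t * w x ≤ q x) ∧ ∃ x₀ ∈ S, q x₀ = t * w x₀ := by
  obtain ⟨x₀, hx₀, ht⟩ := S.exists_mem_eq_inf' hS fun x => q x / w x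
  refine ⟨S.inf' hS fun x => q x / w x, ?_, fun x hx => ?_, x₀, hx₀, ?_⟩
  · exact (Finset.le_inf'_iff _ _).mpr fun x hx => div_nonneg (hq x hx) (hw x hx).le
  · exact (le_div_iff₀ (hw x hx)).mp (S.inf'_le _ hx)
  · rw [ht, div_mul_cancel₀ _ (hw x₀ hx₀).ne']

section NestedMixture

variable {ι : Type*} (D : Finset ι → ι → ℝ)

def IsNestedMixture (q : ι → ℝ) (S : Finset ι) : Prop :=
  ∃ (k : ℕ) (Xs : Fin (k + 1) → Finset ι) (lam : Fin (k + 1) → ℝ),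
    (∀ i, (Xs i).Nonempty) ∧ (∀ i j, i ≤ j → Xs j ⊆ Xs i) ∧
    (∀ i, 0 ≤ lam i) ∧ ∑ i, lam i = 1 ∧ (∀ x, q x = ∑ i, lam i * D (Xs i) x) ∧
    ∀ i, Xs i ⊆ S

variable {D}

lemma isNestedMixture_self {S : Finset ι} (hS : S.Nonempty) : IsNestedMixture D (D S) S :=
  ⟨0, fun _ => S, fun _ => 1, fun _ => hS, fun _ _ _ => subset_rfl, fun _ => zero_le_one,
    by simp, fun x => by simp, fun _ => subset_rfl⟩

lemma IsNestedMixture.cons {r : ι → ℝ} {S T : Finset ι} (hr : IsNestedMixture D r T)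
    (hTS : T ⊆ S) (hS : S.Nonempty) {t : ℝ} (ht0 : 0 ≤ t) (ht1 : t ≤ 1) :
    IsNestedMixture D (fun x => t * D S x + (1 - t) * r x) S := by
  obtain ⟨k, Xs, lam, hne, hchain, hlam0, hlam1, hrep, hsub⟩ := hr
  have hsubS : ∀ i, Xs i ⊆ S := fun i => (hsub i).trans hTS
  refine ⟨k + 1, Fin.cons S Xs, Fin.cons t fun i => (1 - t) * lam i, Fin.cases hS hne, ?_,
    Fin.cases ht0 fun i => mul_nonneg (sub_nonneg.mpr ht1) (hlam0 i), ?_, fun x => ?_,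
    Fin.cases subset_rfl hsubS⟩
  · intro i j hij
    induction j using Fin.cases with
    | zero => rw [Fin.le_zero_iff.mp hij]
    | succ j =>
      induction i using Fin.cases with
      | zero => exact hsubS j
      | succ i => exact hchain i j (Fin.succ_le_succ_iff.mp hij)
  · rw [Fin.sum_cons, ← Finset.mul_sum, hlam1]
    ring
  · rw [Fin.sum_univ_succ]
    simp only [Fin.cons_zero, Fin.cons_succ, hrep x, Finset.mul_sum, mul_assoc]

theorem isNestedMixture_of_forall_notMem_eq_zero [Fintype ι]
    (hpos : ∀ X : Finset ι, ∀ i ∈ X, 0 < D X i) (hzero : ∀ X : Finset ι, ∀ i ∉ X, D X i = 0)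
    (hsum : ∀ X : Finset ι, X.Nonempty → ∑ i, D X i = 1) (S : Finset ι) :
    ∀ q : ι → ℝ, (∀ x, 0 ≤ q x) → ∑ x, q x = 1 → (∀ x ∉ S, q x = 0) →
      IsNestedMixture D q S := by
  classical
  induction S using Finset.strongInduction with
  | _ S ih =>
  intro q hq0 hq1 hqS
  have hS : S.Nonempty := by
    by_contra! hS
    simp [Finset.sum_eq_zero fun x _ => hqS x (hS ▸ Finset.notMem_empty x)] at hq1
  obtain ⟨t, ht0, hle, x₀, hx₀, hx₀t⟩ :=
    Finset.exists_max_mul_le hS (hpos S) fun x _ => hq0 x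
  set p : ι → ℝ := fun x => q x - t * D S x
  have hp0 : ∀ x, 0 ≤ p x := fun x => by
    by_cases hx : x ∈ S
    · exact sub_nonneg.mpr (hle x hx)
    · simp [p, hqS x hx, hzero S x hx]
  have hpsum : ∑ x, p x = 1 - t := by
    simp only [p, Finset.sum_sub_distrib, hq1, ← Finset.mul_sum, hsum S hS, mul_one]
  have hpS : ∀ x ∉ S.erase x₀, p x = 0 := fun x hx => by
    rcases Finset.mem_erase.not.mp hx |> not_and_or.mp with hx | hx
    · simp [p, not_not.mp hx, hx₀t]
    · simp [p, hqS x hx, hzero S x hx]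
  rcases (sub_nonneg.mp (hpsum ▸ Finset.sum_nonneg fun x _ => hp0 x)).lt_or_eq with ht1 | rfl
  · have hr := ih (S.erase x₀) (Finset.erase_ssubset hx₀) (fun x => p x / (1 - t))
      (fun x => div_nonneg (hp0 x) (sub_pos.mpr ht1).le)
      (by rw [← Finset.sum_div, hpsum, div_self (sub_pos.mpr ht1).ne'])
      (fun x hx => by simp [hpS x hx])
    convert hr.cons (S.erase_subset x₀) hS ht0 ht1.le using 1
    funext x
    field_simp [(sub_pos.mpr ht1).ne']
    simp [p]
  · have hp : ∀ x, p x = 0 := fun x =>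
      (Finset.sum_eq_zero_iff_of_nonneg fun y _ => hp0 y).mp (by rw [hpsum, sub_self])
        x (Finset.mem_univ x)
    convert isNestedMixture_self (D := D) hS using 1
    funext x
    simpa [p, sub_eq_zero] using hp x

end NestedMixture

/-- every distribution q on [n] decomposes as a convex combination of
indifference distributions over a nested chain of nonempty subsets; moreover each
indifference distribution is a probability distribution with support exactly X. -/
theorem stmt1 {n : ℕ} (v0 v1 : ℝ) (c : Fin n → ℝ)
    (hc : StrictMono c) (hcv : ∀ j, c j < v0) (hv : v0 < v1)
    (q : Fin n → ℝ) (hq0 : ∀ i, 0 ≤ q i) (hq1 : ∑ i, q i = 1) :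
    (∀ X : Finset (Fin n), X.Nonempty →
      (∀ i, 0 ≤ indiff v0 v1 c X i) ∧
      (∑ i, indiff v0 v1 c X i = 1) ∧
      (∀ i, 0 < indiff v0 v1 c X i ↔ i ∈ X)) ∧
    ∃ (k : ℕ) (Xs : Fin (k + 1) → Finset (Fin n)) (lam : Fin (k + 1) → ℝ),
      (∀ i, (Xs i).Nonempty) ∧
      (∀ i j, i ≤ j → Xs j ⊆ Xs i) ∧
      (∀ i, 0 ≤ lam i) ∧ (∑ i, lam i = 1) ∧
      (∀ x, q x = ∑ i, lam i * indiff v0 v1 c (Xs i) x) := by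
  have hf1 : ∀ j, 1 < (pstarF v0 v1 (c j))⁻¹ := fun j => one_lt_inv_pstarF (hcv j) hv
  have hf : StrictMono fun j => (pstarF v0 v1 (c j))⁻¹ := fun i j hij =>
    inv_pstarF_lt_inv_pstarF (hc hij) (hcv j) hv
  have hdist : ∀ X : Finset (Fin n), X.Nonempty →
      (∀ i, 0 ≤ indiff v0 v1 c X i) ∧ (∑ i, indiff v0 v1 c X i = 1) ∧
      (∀ i, 0 < indiff v0 v1 c X i ↔ i ∈ X) := fun X hX => by
    rw [indiff_eq_normalizedIncrement v0 v1 c hX]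
    exact ⟨normalizedIncrement_nonneg hf1 hf X, sum_normalizedIncrement hf1 hX,
      normalizedIncrement_pos_iff hf1 hf X⟩
  have hzero : ∀ X : Finset (Fin n), ∀ i ∉ X, indiff v0 v1 c X i = 0 := fun X i hi => if_neg hi
  obtain ⟨k, Xs, lam, hne, hchain, hlam0, hlam1, hrep, -⟩ :=
    isNestedMixture_of_forall_notMem_eq_zero (fun X i hi => ((hdist X ⟨i, hi⟩).2.2 i).mpr hi)
      hzero (fun X hX => (hdist X hX).2.1) Finset.univ q hq0 hq1 (by simp)
  exact ⟨hdist, k, Xs, lam, hne, hchain, hlam0, hlam1, hrep⟩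
end

section
/- If p > p*_{x(k)} and the seller's distribution is the indifference distribution q^X, then splitting the buyer's probability p into posteriors p*_{x(k)} (with weight (1-p)/(1-p*_{x(k)})) and 1 (with weight (p - p*_{x(k)})/(1 - p*_{x(k)})) is a valid split (weights are in [0,1], sum to 1, and average to p), and under this split the subsequent allocation is efficient at both posteriors: at posterior p*_{x(k)} all seller types in X price at v_0 and trade always occurs; at posterior 1 the buyer surely has value v_1 and trade occurs at price v_1. -/
open Finset

section Split

variable {a p : ℝ}

lemma split_weights_add (ha : a ≠ 1) : (1 - p) / (1 - a) + (p - a) / (1 - a) = 1 := by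
  field_simp [sub_ne_zero.2 ha.symm]
  ring

lemma split_weights_mean (ha : a ≠ 1) : (1 - p) / (1 - a) * a + (p - a) / (1 - a) * 1 = p := by
  field_simp [sub_ne_zero.2 ha.symm]
  ring

lemma split_weight_low_mem_Icc (ha : a < 1) (hap : a ≤ p) (hp : p ≤ 1) :
    (1 - p) / (1 - a) ∈ Set.Icc 0 1 :=
  ⟨div_nonneg (by linarith) (by linarith), (div_le_one (by linarith)).2 (by linarith)⟩

lemma split_weight_high_mem_Icc (ha : a < 1) (hap : a ≤ p) (hp : p ≤ 1) :
    (p - a) / (1 - a) ∈ Set.Icc 0 1 :=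
  ⟨div_nonneg (by linarith) (by linarith), (div_le_one (by linarith)).2 (by linarith)⟩

end Split

lemma sum_mul_split_affine {ι : Type*} (s : Finset ι) (q u w : ι → ℝ) {l₁ l₂ a p : ℝ}
    (hsum : l₁ + l₂ = 1) (hmean : l₁ * a + l₂ * 1 = p) :
    l₁ * ∑ j ∈ s, q j * (a * u j + (1 - a) * w j) + l₂ * ∑ j ∈ s, q j * u j =
      ∑ j ∈ s, q j * (p * u j + (1 - p) * w j) := by
  rw [mul_sum, mul_sum, ← sum_add_distrib]
  refine sum_congr rfl fun j _ => ?_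
  linear_combination q j * u j * hmean + q j * w j * (hsum - hmean)

section Threshold

variable {v0 v1 c c' : ℝ}

lemma pstarF_lt_one (hv : v0 < v1) (hc : c < v1) : pstarF v0 v1 c < 1 :=
  (div_lt_one (sub_pos.2 hc)).2 (by linarith)

lemma pstarF_le_pstarF (hv : v0 ≤ v1) (hcc : c ≤ c') (hc' : c' < v1) :
    pstarF v0 v1 c' ≤ pstarF v0 v1 c := by
  unfold pstarF
  rw [div_le_div_iff₀ (by linarith) (by linarith)]
  nlinarith

lemma mul_le_of_le_pstarF {q : ℝ} (hc : c < v1) (hq : q ≤ pstarF v0 v1 c) :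
    q * (v1 - c) ≤ v0 - c :=
  (le_div_iff₀ (sub_pos.2 hc)).1 hq

end Threshold

/-- if p > p*_{x(k)} (= pk) and the seller's distribution is the
indifference distribution q^X, splitting p into posteriors pk and 1 with weights
(1-p)/(1-pk) and (p-pk)/(1-pk) is a valid split; at posterior pk every seller type
in X weakly prefers price v0 (trade always occurs), at posterior 1 every type
prefers price v1 (buyer surely has value v1, trade occurs), and the split achieves
the efficient welfare. -/
theorem stmt18 {n : ℕ} (v0 v1 : ℝ) (c : Fin n → ℝ)
    (hc : StrictMono c) (hcv : ∀ j, c j < v0) (hv : v0 < v1)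
    (X : Finset (Fin n)) (hX : X.Nonempty)
    (pk : ℝ) (hpk : pk = pstarF v0 v1 (c (X.max' hX)))
    (p : ℝ) (hp1 : p ≤ 1) (hpgt : p > pk) :
    (0 ≤ (1 - p) / (1 - pk) ∧ (1 - p) / (1 - pk) ≤ 1) ∧
    (0 ≤ (p - pk) / (1 - pk) ∧ (p - pk) / (1 - pk) ≤ 1) ∧
    ((1 - p) / (1 - pk) + (p - pk) / (1 - pk) = 1) ∧
    ((1 - p) / (1 - pk) * pk + (p - pk) / (1 - pk) * 1 = p) ∧
    (∀ j ∈ X, pk * (v1 - c j) ≤ v0 - c j) ∧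
    (∀ j ∈ X, v0 - c j ≤ 1 * (v1 - c j)) ∧
    ((1 - p) / (1 - pk) *
        (∑ j ∈ X, indiff v0 v1 c X j * (pk * (v1 - c j) + (1 - pk) * (v0 - c j))) +
      (p - pk) / (1 - pk) * (∑ j ∈ X, indiff v0 v1 c X j * (v1 - c j)) =
      ∑ j ∈ X, indiff v0 v1 c X j * (p * (v1 - c j) + (1 - p) * (v0 - c j))) := by
  have hcv1 : ∀ j, c j < v1 := fun j => (hcv j).trans hv
  have hpk1 : pk < 1 := hpk ▸ pstarF_lt_one hv (hcv1 _)
  have hsum := split_weights_add (p := p) hpk1.ne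
  have hmean := split_weights_mean (p := p) hpk1.ne
  refine ⟨split_weight_low_mem_Icc hpk1 hpgt.le hp1, split_weight_high_mem_Icc hpk1 hpgt.le hp1,
    hsum, hmean, fun j hj => ?_, fun j _ => by linarith [hcv j],
    sum_mul_split_affine X _ _ _ hsum hmean⟩
  exact mul_le_of_le_pstarF (hcv1 j)
    (hpk ▸ pstarF_le_pstarF hv.le (hc.monotone (X.le_max' j hj)) (hcv1 _))
end
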